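/- arXiv:2201.12654 — 4 statements merged into one kernel-verified Lean document; each statement's English description precedes it below -/
import Mathlib

section
/- Let E be the Euclidean space ℝ^m with m ≥ 3 and its standard inner product. Let V : E → E be a smooth vector field and σ : E → ℝ a smooth function such that for all x, u, v ∈ E one has ⟪DV(x)u, v⟫ + ⟪DV(x)v, u⟫ = 2σ(x)⟪u, v⟫, where DV(x) is the Fréchet derivative of V at x. Then there exist vectors a, γ ∈ E, a real number β, and a linear map B : E → E with ⟪Bu, v⟫ = −⟪u, Bv⟫ for all u, v, such that σ(x) = ⟪a, x⟫ + β and V(x) = σ(x)·x − (1/2)‖x‖²·a + Bx + (1/2)γ for all x ∈ E. -/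
open scoped RealInnerProductSpace

set_option synthInstance.maxHeartbeats 1000000
set_option maxHeartbeats 2000000

namespace ConformalAux

variable {E : Type*} [NormedAddCommGroup E] [InnerProductSpace ℝ E]

noncomputable def Phi (a : E) : E →L[ℝ] E →L[ℝ] E :=
  (innerSL ℝ a).smulRight (ContinuousLinearMap.id ℝ E)
    + ContinuousLinearMap.smulRightL ℝ E E (innerSL ℝ a)
    - (((ContinuousLinearMap.smulRightL ℝ E E).flip a).comp
        (innerSL ℝ : E →L[ℝ] E →L[ℝ] ℝ) : E →L[ℝ] E →L[ℝ] E)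

lemma Phi_apply (a x u : E) : Phi a x u = ⟪a, x⟫ • u + ⟪a, u⟫ • x - ⟪x, u⟫ • a := by
  simp [Phi, ContinuousLinearMap.smulRightL]

lemma hasFDerivAt_inner_applyL {g : E → E →L[ℝ] E} {g' : E →L[ℝ] E →L[ℝ] E} {x : E}
    (hg : HasFDerivAt g g' x) (u v : E) :
    HasFDerivAt (fun y => (⟪g y u, v⟫ : ℝ))
      (((innerSL ℝ v).comp (ContinuousLinearMap.apply ℝ E u)).comp g') x := by
  have h := (((innerSL ℝ v).comp (ContinuousLinearMap.apply ℝ E u)).hasFDerivAt).comp x hg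
  have he : (fun y => (⟪g y u, v⟫ : ℝ))
      = fun y => ((innerSL ℝ v).comp (ContinuousLinearMap.apply ℝ E u)) (g y) :=
    funext fun y => by simp [real_inner_comm]
  rw [he]; exact h

lemma hasFDerivAt_inner_apply2L {g : E → E →L[ℝ] E →L[ℝ] E}
    {g' : E →L[ℝ] (E →L[ℝ] E →L[ℝ] E)} {x : E}
    (hg : HasFDerivAt g g' x) (u v w : E) :
    HasFDerivAt (fun y => (⟪g y u v, w⟫ : ℝ))
      (((innerSL ℝ w).comp ((ContinuousLinearMap.apply ℝ E v).comp
        (ContinuousLinearMap.apply ℝ (E →L[ℝ] E) u))).comp g') x := by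
  have h := HasFDerivAt.comp (𝕜 := ℝ) (F := E →L[ℝ] E →L[ℝ] E) x (((innerSL ℝ w).comp
        ((ContinuousLinearMap.apply ℝ E v).comp
        (ContinuousLinearMap.apply ℝ (E →L[ℝ] E) u))).hasFDerivAt) hg
  have he : (fun y => (⟪g y u v, w⟫ : ℝ))
      = fun y => ((innerSL ℝ w).comp ((ContinuousLinearMap.apply ℝ E v).comp
        (ContinuousLinearMap.apply ℝ (E →L[ℝ] E) u))) (g y) :=
    funext fun y => by simp [real_inner_comm]
  rw [he]; exact h

variable {V : E → E} {σ : E → ℝ}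

lemma step1 (hV : ContDiff ℝ (⊤ : ℕ∞) V) (hσ : ContDiff ℝ (⊤ : ℕ∞) σ)
    (hconf : ∀ x u v : E, ⟪fderiv ℝ V x u, v⟫ + ⟪fderiv ℝ V x v, u⟫ = 2 * σ x * ⟪u, v⟫)
    (x z u v : E) :
    ⟪fderiv ℝ (fderiv ℝ V) x z u, v⟫ + ⟪fderiv ℝ (fderiv ℝ V) x z v, u⟫
      = 2 * (fderiv ℝ σ x z) * ⟪u, v⟫ := by
  have hW : ContDiff ℝ (⊤ : ℕ∞) (fderiv ℝ V) := hV.fderiv_right (m := (⊤ : ℕ∞)) (by simp)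
  have hW2 : HasFDerivAt (fderiv ℝ V) (fderiv ℝ (fderiv ℝ V) x) x :=
    (hW.differentiable (by simp) x).hasFDerivAt
  have hσ' : HasFDerivAt σ (fderiv ℝ σ x) x := (hσ.differentiable (by simp) x).hasFDerivAt
  have h1 := (hasFDerivAt_inner_applyL hW2 u v).add (hasFDerivAt_inner_applyL hW2 v u)
  have h2 := (hσ'.const_mul (2 : ℝ)).mul_const (⟪u, v⟫ : ℝ)
  have hfun : (fun y => (⟪fderiv ℝ V y u, v⟫ + ⟪fderiv ℝ V y v, u⟫ : ℝ))
      = fun y => 2 * σ y * ⟪u, v⟫ := funext fun y => hconf y u v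
  rw [← hfun] at h2
  have hD := h1.unique h2
  have hz := DFunLike.congr_fun hD z
  simp [real_inner_comm] at hz ⊢
  ring_nf at hz ⊢
  linarith

lemma sym2 (hV : ContDiff ℝ (⊤ : ℕ∞) V) (x z u : E) :
    fderiv ℝ (fderiv ℝ V) x z u = fderiv ℝ (fderiv ℝ V) x u z :=
  second_derivative_symmetric (fun y => (hV.differentiable (by simp) y).hasFDerivAt)
    (((hV.fderiv_right (m := (⊤ : ℕ∞)) (by simp)).differentiable (by simp) x).hasFDerivAt) z u

lemma koszul (hV : ContDiff ℝ (⊤ : ℕ∞) V) (hσ : ContDiff ℝ (⊤ : ℕ∞) σ)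
    (hconf : ∀ x u v : E, ⟪fderiv ℝ V x u, v⟫ + ⟪fderiv ℝ V x v, u⟫ = 2 * σ x * ⟪u, v⟫)
    (x u v w : E) :
    ⟪fderiv ℝ (fderiv ℝ V) x u v, w⟫
      = fderiv ℝ σ x u * ⟪v, w⟫ + fderiv ℝ σ x v * ⟪u, w⟫ - fderiv ℝ σ x w * ⟪u, v⟫ := by
  have h1 := step1 hV hσ hconf x u v w
  have h2 := step1 hV hσ hconf x v u w
  have h3 := step1 hV hσ hconf x w u v
  have s1 : ⟪fderiv ℝ (fderiv ℝ V) x u w, v⟫ = ⟪fderiv ℝ (fderiv ℝ V) x w u, v⟫ := by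
    rw [sym2 hV]
  have s2 : ⟪fderiv ℝ (fderiv ℝ V) x v w, u⟫ = ⟪fderiv ℝ (fderiv ℝ V) x w v, u⟫ := by
    rw [sym2 hV]
  have s3 : ⟪fderiv ℝ (fderiv ℝ V) x v u, w⟫ = ⟪fderiv ℝ (fderiv ℝ V) x u v, w⟫ := by
    rw [sym2 hV]
  have c1 : (⟪u, w⟫ : ℝ) = ⟪w, u⟫ := real_inner_comm _ _
  have c2 : (⟪v, w⟫ : ℝ) = ⟪w, v⟫ := real_inner_comm _ _
  have c3 : (⟪u, v⟫ : ℝ) = ⟪v, u⟫ := real_inner_comm _ _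
  linarith


lemma hasFDerivAt_model (a x : E) :
    HasFDerivAt (fun y : E => ⟪a, y⟫ • y - ((1 / 2 : ℝ) * ‖y‖ ^ 2) • a) (Phi a x) x := by
  have h1 : HasFDerivAt (fun y : E => (⟪a, y⟫ : ℝ)) (innerSL ℝ a) x := by
    simpa using (innerSL ℝ a).hasFDerivAt
  have h2 : HasFDerivAt (fun y : E => ⟪a, y⟫ • y)
      (⟪a, x⟫ • ContinuousLinearMap.id ℝ E + (innerSL ℝ a).smulRight x) x :=
    h1.smul (hasFDerivAt_id x)
  have h3 : HasFDerivAt (fun y : E => (‖y‖ ^ 2 : ℝ))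
      ((fderivInnerCLM ℝ (x, x)).comp ((ContinuousLinearMap.id ℝ E).prod
        (ContinuousLinearMap.id ℝ E))) x := by
    have h := HasFDerivAt.inner ℝ (hasFDerivAt_id x) (hasFDerivAt_id x)
    have he : (fun y : E => (‖y‖ ^ 2 : ℝ)) = fun y : E => (⟪y, y⟫ : ℝ) :=
      funext fun y => by rw [real_inner_self_eq_norm_sq]
    rw [he]
    simpa using h
  have h4 := ((h3.const_mul ((1:ℝ)/2)).smul_const a)
  have h5 := h2.sub h4
  convert h5 using 1
  ext u
  simp [Phi_apply, fderivInnerCLM_apply, real_inner_comm, smul_smul]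
  ext u
  simp [Phi_apply, fderivInnerCLM_apply, real_inner_comm, smul_smul]
  module

lemma step2 (hV : ContDiff ℝ (⊤ : ℕ∞) V) (hσ : ContDiff ℝ (⊤ : ℕ∞) σ)
    (hconf : ∀ x u v : E, ⟪fderiv ℝ V x u, v⟫ + ⟪fderiv ℝ V x v, u⟫ = 2 * σ x * ⟪u, v⟫)
    (x z u v w : E) :
    ⟪fderiv ℝ (fderiv ℝ (fderiv ℝ V)) x z u v, w⟫
      = fderiv ℝ (fderiv ℝ σ) x z u * ⟪v, w⟫ + fderiv ℝ (fderiv ℝ σ) x z v * ⟪u, w⟫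
        - fderiv ℝ (fderiv ℝ σ) x z w * ⟪u, v⟫ := by
  have hW2 : ContDiff ℝ (⊤ : ℕ∞) (fderiv ℝ (fderiv ℝ V)) :=
    (hV.fderiv_right (m := (⊤ : ℕ∞)) (by simp)).fderiv_right (m := (⊤ : ℕ∞)) (by simp)
  have hW2' : HasFDerivAt (fderiv ℝ (fderiv ℝ V)) (fderiv ℝ (fderiv ℝ (fderiv ℝ V)) x) x :=
    (hW2.differentiable (by simp) x).hasFDerivAt
  have hdσ : HasFDerivAt (fderiv ℝ σ) (fderiv ℝ (fderiv ℝ σ) x) x :=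
    ((hσ.fderiv_right (m := (⊤ : ℕ∞)) (by simp)).differentiable (by simp) x).hasFDerivAt
  -- scalar evaluations of fderiv σ
  have ev : ∀ p : E, HasFDerivAt (fun y => fderiv ℝ σ y p)
      ((ContinuousLinearMap.apply ℝ ℝ p).comp (fderiv ℝ (fderiv ℝ σ) x)) x := fun p =>
    ((ContinuousLinearMap.apply ℝ ℝ p).hasFDerivAt).comp x hdσ
  have hL := hasFDerivAt_inner_apply2L hW2' u v w
  have hR := (((ev u).mul_const (⟪v, w⟫ : ℝ)).add ((ev v).mul_const (⟪u, w⟫ : ℝ))).sub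
      ((ev w).mul_const (⟪u, v⟫ : ℝ))
  have hfun : (fun y => (⟪fderiv ℝ (fderiv ℝ V) y u v, w⟫ : ℝ))
      = fun y => fderiv ℝ σ y u * ⟪v, w⟫ + fderiv ℝ σ y v * ⟪u, w⟫
          - fderiv ℝ σ y w * ⟪u, v⟫ := funext fun y => koszul hV hσ hconf y u v w
  rw [hfun] at hL
  have hD := hL.unique hR
  have hz := DFunLike.congr_fun hD z
  simp [real_inner_comm] at hz ⊢
  ring_nf at hz ⊢
  linarith

lemma sym3 (hV : ContDiff ℝ (⊤ : ℕ∞) V) (x z u : E) :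
    fderiv ℝ (fderiv ℝ (fderiv ℝ V)) x z u = fderiv ℝ (fderiv ℝ (fderiv ℝ V)) x u z :=
  second_derivative_symmetric
    (fun y => (((hV.fderiv_right (m := (⊤ : ℕ∞)) (by simp))).differentiable (by simp) y).hasFDerivAt)
    ((((hV.fderiv_right (m := (⊤ : ℕ∞)) (by simp)).fderiv_right (m := (⊤ : ℕ∞)) (by simp)).differentiable (by simp) x).hasFDerivAt) z u


lemma exists_third {n : ℕ} (hn : 3 ≤ n) (i j : Fin n) : ∃ k, k ≠ i ∧ k ≠ j := by
  by_contra h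
  push_neg at h
  have hsub : (Finset.univ : Finset (Fin n)) ⊆ {i, j} := by
    intro k _
    by_cases hk : k = i
    · simp [hk]
    · simp [h k hk]
  have h1 := Finset.card_le_card hsub
  have h2 : ({i, j} : Finset (Fin n)).card ≤ 2 :=
    (Finset.card_insert_le _ _).trans (by simp)
  simp [Finset.card_univ] at h1
  omega

lemma Qzero [FiniteDimensional ℝ E] (hdim : 3 ≤ Module.finrank ℝ E)
    (hV : ContDiff ℝ (⊤ : ℕ∞) V) (hσ : ContDiff ℝ (⊤ : ℕ∞) σ)
    (hconf : ∀ x u v : E, ⟪fderiv ℝ V x u, v⟫ + ⟪fderiv ℝ V x v, u⟫ = 2 * σ x * ⟪u, v⟫)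
    (x : E) : fderiv ℝ (fderiv ℝ σ) x = 0 := by
  set Q := fderiv ℝ (fderiv ℝ σ) x with hQdef
  have key : ∀ z u v w : E, Q z u * ⟪v, w⟫ + Q z v * ⟪u, w⟫ - Q z w * ⟪u, v⟫
      = Q u z * ⟪v, w⟫ + Q u v * ⟪z, w⟫ - Q u w * ⟪z, v⟫ := by
    intro z u v w
    have h1 := step2 hV hσ hconf x z u v w
    have h2 := step2 hV hσ hconf x u z v w
    rw [sym3 hV x z u] at h1
    rw [h2] at h1
    linarith
  let b := stdOrthonormalBasis ℝ E
  have hij : ∀ i j, (⟪b i, b j⟫ : ℝ) = if i = j then 1 else 0 :=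
    orthonormal_iff_ite.mp b.orthonormal
  have diag : ∀ i j, i ≠ j → Q (b j) (b j) = - (Q (b i) (b i)) := by
    intro i j hij'
    have := key (b j) (b i) (b j) (b i)
    simp [hij, hij', hij'.symm] at this
    linarith
  have offd : ∀ i j k, i ≠ j → k ≠ i → k ≠ j → Q (b i) (b j) = 0 := by
    intro i j k hij' hki hkj
    have := key (b i) (b k) (b j) (b k)
    simp [hij, hij', hki, hkj, hki.symm, hkj.symm, Ne.symm hij'] at this
    linarith
  have entries : ∀ i j, Q (b i) (b j) = 0 := by
    intro i j
    by_cases hij' : i = j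
    · subst hij'
      obtain ⟨j', hj'i, -⟩ := exists_third hdim i i
      obtain ⟨k, hki, hkj'⟩ := exists_third hdim i j'
      have d1 := diag j' i hj'i
      have d2 := diag k i hki
      have d3 := diag k j' hkj'
      linarith
    · obtain ⟨k, hki, hkj⟩ := exists_third hdim i j
      exact offd i j k hij' hki hkj
  have : ∀ z u : E, Q z u = 0 := by
    intro z u
    have hz := b.sum_repr z
    have hu := b.sum_repr u
    rw [← hz, ← hu]
    simp only [map_sum, map_smul, ContinuousLinearMap.coe_sum', Finset.sum_apply,
      ContinuousLinearMap.smul_apply, smul_eq_mul]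
    simp [entries]
  ext z u
  simp [this z u]


end ConformalAux


open ConformalAux in
/-- All conformal vector fields on Euclidean space `ℝ^m`, `m ≥ 3`, are of the
standard form (equation (5.2) of the paper with `ν = 0`). -/
theorem conformal_field_euclidean_classification (m : ℕ) (hm : 3 ≤ m)
    (V : EuclideanSpace ℝ (Fin m) → EuclideanSpace ℝ (Fin m))
    (σ : EuclideanSpace ℝ (Fin m) → ℝ)
    (hV : ContDiff ℝ (⊤ : ℕ∞) V) (hσ : ContDiff ℝ (⊤ : ℕ∞) σ)
    (hconf : ∀ x u v : EuclideanSpace ℝ (Fin m),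
      ⟪fderiv ℝ V x u, v⟫ + ⟪fderiv ℝ V x v, u⟫ = 2 * σ x * ⟪u, v⟫) :
    ∃ (a γ : EuclideanSpace ℝ (Fin m)) (β : ℝ)
      (B : EuclideanSpace ℝ (Fin m) →ₗ[ℝ] EuclideanSpace ℝ (Fin m)),
      (∀ u v : EuclideanSpace ℝ (Fin m), ⟪B u, v⟫ = -⟪u, B v⟫) ∧
      (∀ x, σ x = ⟪a, x⟫ + β) ∧
      (∀ x, V x = σ x • x - ((1 / 2 : ℝ) * ‖x‖ ^ 2) • a + B x + (1 / 2 : ℝ) • γ) := by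
  have hdim : 3 ≤ Module.finrank ℝ (EuclideanSpace ℝ (Fin m)) := by
    rw [finrank_euclideanSpace_fin]; exact hm
  have hdσc : ∀ x, fderiv ℝ σ x = fderiv ℝ σ 0 := fun x =>
    is_const_of_fderiv_eq_zero ((hσ.fderiv_right (m := (⊤ : ℕ∞)) (by simp)).differentiable (by simp))
      (Qzero hdim hV hσ hconf) x 0
  set a := (InnerProductSpace.toDual ℝ (EuclideanSpace ℝ (Fin m))).symm (fderiv ℝ σ 0) with ha
  have hay : ∀ y, ⟪a, y⟫ = fderiv ℝ σ 0 y := fun y => by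
    rw [ha]; exact InnerProductSpace.toDual_symm_apply
  have haff : ∀ x, σ x = ⟪a, x⟫ + σ 0 := by
    intro x
    have hg : ∀ y, HasFDerivAt (fun t => σ t - fderiv ℝ σ 0 t)
        (fderiv ℝ σ y - fderiv ℝ σ 0) y := fun y =>
      ((hσ.differentiable (by simp) y).hasFDerivAt).sub (fderiv ℝ σ 0).hasFDerivAt
    have hconst := is_const_of_fderiv_eq_zero (fun y => (hg y).differentiableAt)
      (fun y => by rw [(hg y).fderiv, hdσc y, sub_self]) x 0
    simp only [map_zero, sub_zero] at hconst
    rw [hay x]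
    linarith [hconst]
  have hW2 : ∀ x, fderiv ℝ (fderiv ℝ V) x = Phi a := by
    intro x
    refine ContinuousLinearMap.ext fun z => ContinuousLinearMap.ext fun u => ?_
    apply ext_inner_right ℝ
    intro w
    rw [koszul hV hσ hconf x z u w, Phi_apply, hdσc x, ← hay z, ← hay u, ← hay w]
    simp only [inner_sub_left, inner_add_left, real_inner_smul_left]
    have c1 : (⟪z, w⟫ : ℝ) = ⟪w, z⟫ := real_inner_comm _ _
    have c2 : (⟪u, w⟫ : ℝ) = ⟪w, u⟫ := real_inner_comm _ _
    ring_nf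
  have hW : ∀ x, fderiv ℝ V x = fderiv ℝ V 0 + Phi a x := by
    intro x
    have hM : ∀ y, HasFDerivAt (fun t => fderiv ℝ V t - Phi a t)
        (fderiv ℝ (fderiv ℝ V) y - Phi a) y := fun y =>
      (((hV.fderiv_right (m := (⊤ : ℕ∞)) (by simp)).differentiable (by simp) y).hasFDerivAt).sub (Phi a).hasFDerivAt
    have hconst := is_const_of_fderiv_eq_zero (fun y => (hM y).differentiableAt)
      (fun y => by rw [(hM y).fderiv, hW2 y]; exact sub_self _) x 0
    simp only [map_zero, sub_zero] at hconst
    rw [sub_eq_iff_eq_add] at hconst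
    rw [hconst]
  have hVx : ∀ x, V x = ⟪a, x⟫ • x - ((1 / 2 : ℝ) * ‖x‖ ^ 2) • a + fderiv ℝ V 0 x + V 0 := by
    intro x
    have hK : ∀ y, HasFDerivAt
        (fun t => V t - (⟪a, t⟫ • t - ((1 / 2 : ℝ) * ‖t‖ ^ 2) • a) - fderiv ℝ V 0 t)
        (fderiv ℝ V y - Phi a y - fderiv ℝ V 0) y := fun y =>
      (((hV.differentiable (by simp) y).hasFDerivAt).sub (hasFDerivAt_model a y)).sub
        (fderiv ℝ V 0).hasFDerivAt
    have hconst := is_const_of_fderiv_eq_zero (fun y => (hK y).differentiableAt)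
      (fun y => by rw [(hK y).fderiv, hW y]; abel) x 0
    have h00 : V 0 - (⟪a, (0 : EuclideanSpace ℝ (Fin m))⟫ • (0 : EuclideanSpace ℝ (Fin m))
        - ((1 / 2 : ℝ) * ‖(0 : EuclideanSpace ℝ (Fin m))‖ ^ 2) • a)
        - fderiv ℝ V 0 (0 : EuclideanSpace ℝ (Fin m)) = V 0 := by
      simp
    rw [h00] at hconst
    have := sub_eq_iff_eq_add.mp (sub_eq_iff_eq_add.mp hconst)
    rw [this]; abel
  refine ⟨a, (2 : ℝ) • V 0, σ 0,
    (fderiv ℝ V 0 : EuclideanSpace ℝ (Fin m) →ₗ[ℝ] EuclideanSpace ℝ (Fin m))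
      - σ 0 • LinearMap.id, ?_, haff, ?_⟩
  · intro u v
    have h0 := hconf 0 u v
    simp only [LinearMap.sub_apply, LinearMap.smul_apply, LinearMap.id_apply,
      ContinuousLinearMap.coe_coe, inner_sub_left, inner_sub_right,
      real_inner_smul_left, real_inner_smul_right]
    have c1 : (⟪u, fderiv ℝ V 0 v⟫ : ℝ) = ⟪fderiv ℝ V 0 v, u⟫ := real_inner_comm _ _
    have c2 : (⟪v, u⟫ : ℝ) = ⟪u, v⟫ := real_inner_comm _ _
    rw [c1]
    linarith
  · intro x
    rw [haff x, hVx x]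
    simp only [LinearMap.sub_apply, LinearMap.smul_apply, LinearMap.id_apply,
      ContinuousLinearMap.coe_coe]
    module
end

section
/- Let E be a real inner product space and V̄ : E → E a differentiable vector field. Define V(y) = V̄(y) − ⟪V̄(y), y⟫·y. Then for every x ∈ E with ‖x‖ = 1 and all u, v ∈ E with ⟪u, x⟫ = ⟪v, x⟫ = 0: [⟪DV̄(x)u, v⟫ + ⟪DV̄(x)v, u⟫] − [⟪DV(x)u, v⟫ + ⟪DV(x)v, u⟫] = 2⟪V̄(x), x⟫·⟪u, v⟫, where D denotes the Fréchet derivative. (This is Lemma 3.1 of the paper, 𝓛_{V̄} ḡ − 𝓛_V g = −2ε_N C 𝒜, for the unit sphere, whose outward unit normal at x is x and whose Weingarten operator is 𝒜u = −u.) -/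
/-!
On the unit sphere the normal at `y` is `y` itself, so the tangential part of `V̄` is
`y ↦ V̄ y - ⟪V̄ y, y⟫ • y`. By the product rule its derivative in direction `w` differs from
`DV̄(x) w` by a multiple of `x`, which is invisible to tangent vectors, plus `⟪V̄ x, x⟫ • w`,
which comes from differentiating the factor `y`; symmetrising gives `2 C ⟪u, v⟫`.
-/

open scoped RealInnerProductSpace

section TangentialPart

variable {E : Type*} [NormedAddCommGroup E] [InnerProductSpace ℝ E]

noncomputable def tangentialPart (F : E → E) (y : E) : E := F y - ⟪F y, y⟫ • y

theorem fderiv_tangentialPart_apply {F : E → E} {x : E} (hF : DifferentiableAt ℝ F x)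
    (w : E) :
    fderiv ℝ (tangentialPart F) x w =
      fderiv ℝ F x w - (⟪fderiv ℝ F x w, x⟫ + ⟪F x, w⟫) • x - ⟪F x, x⟫ • w := by
  have hF' := hF.hasFDerivAt
  have hInnerSmul := (hF'.inner ℝ (hasFDerivAt_id x)).smul (hasFDerivAt_id x)
  have hTangential : HasFDerivAt (tangentialPart F) _ x := hF'.sub hInnerSmul
  rw [hTangential.fderiv]
  simp only [id_eq, real_inner_comm x (F x), sub_apply, add_apply, smul_apply,
    ContinuousLinearMap.id_apply, ContinuousLinearMap.smulRight_apply,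
    ContinuousLinearMap.comp_apply, ContinuousLinearMap.prod_apply, fderivInnerCLM_apply,
    add_smul]
  abel

theorem inner_fderiv_tangentialPart_of_inner_eq_zero {F : E → E} {x u v : E}
    (hF : DifferentiableAt ℝ F x) (hv : ⟪v, x⟫ = 0) :
    ⟪fderiv ℝ (tangentialPart F) x u, v⟫ = ⟪fderiv ℝ F x u, v⟫ - ⟪F x, x⟫ * ⟪u, v⟫ := by
  rw [fderiv_tangentialPart_apply hF, inner_sub_left, inner_sub_left, inner_smul_left,
    inner_smul_left, real_inner_comm v x, hv]
  simp

end TangentialPart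

/-- Lemma 3.1 of the paper for the unit sphere: `𝓛_{V̄} ḡ − 𝓛_V g = 2C⟪·,·⟫` on
tangent vectors, where `C(x) = ⟪V̄(x), x⟫` and `V` is the tangential part of `V̄`. -/
theorem lie_derivative_tangential_part_sphere {E : Type*} [NormedAddCommGroup E]
    [InnerProductSpace ℝ E]
    (Vbar : E → E) (hVbar : Differentiable ℝ Vbar)
    (V : E → E) (hV : ∀ y, V y = Vbar y - ⟪Vbar y, y⟫ • y) :
    ∀ x u v : E, ‖x‖ = 1 → ⟪u, x⟫ = 0 → ⟪v, x⟫ = 0 →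
      (⟪fderiv ℝ Vbar x u, v⟫ + ⟪fderiv ℝ Vbar x v, u⟫)
        - (⟪fderiv ℝ V x u, v⟫ + ⟪fderiv ℝ V x v, u⟫)
        = 2 * ⟪Vbar x, x⟫ * ⟪u, v⟫ := by
  intro x u v _ hu hv
  obtain rfl : V = tangentialPart Vbar := funext hV
  rw [inner_fderiv_tangentialPart_of_inner_eq_zero (hVbar x) hv,
    inner_fderiv_tangentialPart_of_inner_eq_zero (hVbar x) hu, real_inner_comm v u]
  ring
end

section
/- Let E be a real inner product space and V̄ : E → E a differentiable vector field satisfying the conformal Killing equation ⟪DV̄(x)u, v⟫ + ⟪DV̄(x)v, u⟫ = 2σ(x)⟪u, v⟫ for all x, u, v ∈ E, for some σ : E → ℝ. Define the angle function C(y) = ⟪V̄(y), y⟫. Then for every x ∈ E with ‖x‖ = 1 and every u ∈ E with ⟪u, x⟫ = 0, the derivative of C at x in the direction u equals ⟪V̄(x), u⟫ − ⟪DV̄(x)x, u⟫. (This is Lemma 3.3 of the paper, ∇C = −(D_N V̄)^T − 𝒜V, for the unit sphere, where N = x and 𝒜u = −u.) -/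
open scoped RealInnerProductSpace

theorem inner_apply_eq_neg_of_conformal_of_inner_eq_zero {E : Type*} [NormedAddCommGroup E]
    [InnerProductSpace ℝ E] {A : E →L[ℝ] E} {s : ℝ}
    (hA : ∀ u v : E, ⟪A u, v⟫ + ⟪A v, u⟫ = 2 * s * ⟪u, v⟫) {u v : E} (huv : ⟪u, v⟫ = 0) :
    ⟪A u, v⟫ = -⟪A v, u⟫ := by
  have h := hA u v
  rwa [huv, mul_zero, add_eq_zero_iff_eq_neg] at h

/-- Lemma 3.3 of the paper on the unit sphere: the gradient of the angle function
`C(y) = ⟪V̄(y), y⟫` satisfies `∇C = −(D_N V̄)^T − 𝒜V` with `N = x`, `𝒜u = −u`. -/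
theorem grad_angle_function_sphere {E : Type*} [NormedAddCommGroup E]
    [InnerProductSpace ℝ E]
    (Vbar : E → E) (hVbar : Differentiable ℝ Vbar)
    (σ : E → ℝ)
    (hconf : ∀ x u v : E,
      ⟪fderiv ℝ Vbar x u, v⟫ + ⟪fderiv ℝ Vbar x v, u⟫ = 2 * σ x * ⟪u, v⟫)
    (C : E → ℝ) (hC : ∀ y, C y = ⟪Vbar y, y⟫) :
    ∀ x u : E, ‖x‖ = 1 → ⟪u, x⟫ = 0 →
      fderiv ℝ C x u = ⟪Vbar x, u⟫ - ⟪fderiv ℝ Vbar x x, u⟫ := by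
  intro x u _ hux
  have hskew : ⟪fderiv ℝ Vbar x u, x⟫ = -⟪fderiv ℝ Vbar x x, u⟫ :=
    inner_apply_eq_neg_of_conformal_of_inner_eq_zero (hconf x) hux
  rw [funext hC, fderiv_inner_apply ℝ (hVbar x) differentiableAt_fun_id, fderiv_fun_id,
    ContinuousLinearMap.id_apply, hskew, sub_eq_add_neg]
end

section
/- Let η be the Minkowski bilinear form on ℝ^{n+1}, η(x, y) = −x₀y₀ + Σ_{i=1}^{n} xᵢyᵢ, and let γ ∈ ℝ^{n+1} be a fixed vector. Define V(y) = γ + η(γ, y)·y. Then for every x ∈ ℝ^{n+1} with η(x, x) = −1 and all u, v ∈ ℝ^{n+1} with η(u, x) = η(v, x) = 0: η(DV(x)u, v) + η(DV(x)v, u) = 2·η(γ, x)·η(u, v), where D denotes the Fréchet derivative. (This is the computation 𝓛_V g = 2 h_γ g of Example 5.2 of the paper on the hyperboloid model of ℍ^n in Lorentz space, showing the tangential part of the constant field γ endows ℍ^n with a gradient Ricci almost soliton structure with soliton function λ_γ = −(n−1) + h_γ.) -/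
/-!
The tangential part of a constant field is `V y = γ + η(γ, y) y`, so its differential is
`DV(x) w = η(γ, x) w + η(γ, w) x`. Pairing with a second tangent vector, the terms along the
normal `x` vanish because `u, v ⊥ x`, and what remains is `η(γ, x)` times the symmetric
expression `η(u, v) + η(v, u) = 2 η(u, v)`.
-/

section Derivative

variable {𝕜 E : Type*} [NontriviallyNormedField 𝕜] [NormedAddCommGroup E] [NormedSpace 𝕜 E]

theorem hasFDerivAt_const_add_smul_self (γ x : E) (ℓ : E →L[𝕜] 𝕜) :
    HasFDerivAt (fun y => γ + ℓ y • y) (ℓ x • ContinuousLinearMap.id 𝕜 E + ℓ.smulRight x) x :=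
  ((hasFDerivAt_const γ x).add (ℓ.hasFDerivAt.smul (hasFDerivAt_id x))).congr_fderiv (zero_add _)

theorem fderiv_const_add_smul_self_apply (γ x w : E) (ℓ : E →L[𝕜] 𝕜) :
    fderiv 𝕜 (fun y => γ + ℓ y • y) x w = ℓ x • w + ℓ w • x := by
  simp [(hasFDerivAt_const_add_smul_self γ x ℓ).fderiv]

end Derivative

theorem LinearMap.BilinForm.IsSymm.apply_smul_add_smul_add_apply_smul_add_smul
    {R M : Type*} [CommRing R] [AddCommGroup M] [Module R M]
    {B : LinearMap.BilinForm R M} (hB : B.IsSymm)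
    {x u v : M} (hu : B u x = 0) (hv : B v x = 0) (c : R) (ℓ : M → R) :
    B (c • u + ℓ u • x) v + B (c • v + ℓ v • x) u = 2 * c * B u v := by
  have hxu : B x u = 0 := hB.eq x u ▸ hu
  have hxv : B x v = 0 := hB.eq x v ▸ hv
  simp only [map_add, map_smul, LinearMap.add_apply, LinearMap.smul_apply, smul_eq_mul,
    hxu, hxv, hB.eq v u]
  ring

def minkowskiForm (n : ℕ) : LinearMap.BilinForm ℝ (Fin (n + 1) → ℝ) :=
  LinearMap.mk₂ ℝ (fun x y => -(x 0 * y 0) + ∑ i : Fin n, x i.succ * y i.succ)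
    (fun _ _ _ => by simp only [Pi.add_apply, add_mul, Finset.sum_add_distrib]; ring)
    (fun _ _ _ => by simp only [Pi.smul_apply, smul_eq_mul, mul_assoc, ← Finset.mul_sum]; ring)
    (fun _ _ _ => by simp only [Pi.add_apply, mul_add, Finset.sum_add_distrib]; ring)
    (fun _ _ _ => by simp only [Pi.smul_apply, smul_eq_mul, mul_left_comm, ← Finset.mul_sum]; ring)

theorem minkowskiForm_apply (n : ℕ) (x y : Fin (n + 1) → ℝ) :
    minkowskiForm n x y = -(x 0 * y 0) + ∑ i : Fin n, x i.succ * y i.succ :=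
  rfl

theorem minkowskiForm_isSymm (n : ℕ) : (minkowskiForm n).IsSymm :=
  ⟨fun x y => by simp only [minkowskiForm_apply, mul_comm]⟩

/-- Example 5.2 of the paper on the hyperboloid model of `ℍ^n`: the tangential part
`V(y) = γ + η(γ,y)y` of the constant field `γ` satisfies `𝓛_V g = 2h_γ g` on
tangent vectors. -/
theorem lie_derivative_height_gradient_hyperbolic (n : ℕ)
    (η : (Fin (n + 1) → ℝ) → (Fin (n + 1) → ℝ) → ℝ)
    (hη : ∀ x y, η x y = -(x 0 * y 0) + ∑ i : Fin n, x i.succ * y i.succ)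
    (γ : Fin (n + 1) → ℝ)
    (V : (Fin (n + 1) → ℝ) → (Fin (n + 1) → ℝ))
    (hV : ∀ y, V y = γ + η γ y • y) :
    ∀ x u v : Fin (n + 1) → ℝ, η x x = -1 → η u x = 0 → η v x = 0 →
      η (fderiv ℝ V x u) v + η (fderiv ℝ V x v) u = 2 * η γ x * η u v := by
  intro x u v _ hu hv
  obtain rfl : η = fun x y => minkowskiForm n x y := funext₂ hη
  let ℓ := LinearMap.toContinuousLinearMap (minkowskiForm n γ)
  obtain rfl : V = fun y => γ + ℓ y • y := funext hV
  simp only [fderiv_const_add_smul_self_apply]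
  exact (minkowskiForm_isSymm n).apply_smul_add_smul_add_apply_smul_add_smul hu hv _ _
end
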